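/- arXiv:2209.05446 — 3 statements merged into one kernel-verified Lean document; each statement's English description precedes it below -/
import Mathlib

section
/- Let f be an additive feature on ℝ^d, x ∈ ℝ^d, δ̄ ≥ 0, and let (δ_x^1, δ^1), …, (δ_x^m, δ^m) be verification steps with δ_x^i ≥ 0 and δ^i ≥ 0 for all i. If for every δ_y ∈ [0, δ̄] there exists an index i with δ_x^i ≤ δ_y ≤ δ_x^i + δ^i, then I_{f,δ̄}(x) ⊆ ⋃_{i=1}^m I_{f,δ^i}(f(x, δ_x^i)). -/
/-- If verification steps `(δ_x^i, δ^i)`, `i = 1..m`, cover `[0, δ̄]`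
(every `δ_y ∈ [0,δ̄]` satisfies `δ_x^i ≤ δ_y ≤ δ_x^i + δ^i` for some `i`), then the
feature neighborhood `I_{f,δ̄}(x)` is contained in the union of the steps'
neighborhoods `I_{f,δ^i}(f(x,δ_x^i))`. -/
theorem feature_neighborhood_covered_by_steps {d m : ℕ}
    (f : (Fin d → ℝ) → ℝ → (Fin d → ℝ))
    (hf0 : ∀ x, f x 0 = x)
    (hfadd : ∀ x a b, 0 ≤ a → 0 ≤ b → f (f x a) b = f x (a + b))
    (x : Fin d → ℝ) (δbar : ℝ) (hδbar : 0 ≤ δbar)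
    (δx δ : Fin m → ℝ)
    (hδx : ∀ i, 0 ≤ δx i) (hδ : ∀ i, 0 ≤ δ i)
    (hcover : ∀ δy, 0 ≤ δy → δy ≤ δbar → ∃ i, δx i ≤ δy ∧ δy ≤ δx i + δ i) :
    {y : Fin d → ℝ | ∃ t, 0 ≤ t ∧ t ≤ δbar ∧ y = f x t} ⊆
      ⋃ i : Fin m, {y : Fin d → ℝ | ∃ t, 0 ≤ t ∧ t ≤ δ i ∧ y = f (f x (δx i)) t} := by
  rintro y ⟨t, ht0, htb, rfl⟩
  obtain ⟨i, h1, h2⟩ := hcover t ht0 htb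
  refine Set.mem_iUnion.2 ⟨i, ⟨t - δx i, by linarith, by linarith, ?_⟩⟩
  rw [hfadd x (δx i) (t - δx i) (hδx i) (by linarith), add_sub_cancel]
end

section
/- Soundness of divide-and-conquer feature verification (Theorem 1, soundness part): Let D : ℝ^d → ℝ^c be a classifier, f an additive feature on ℝ^d, x ∈ ℝ^d, δ̄ ≥ 0, and let 0 = t_0 ≤ t_1 ≤ … ≤ t_n = δ̄ be a partition of [0, δ̄]. If for each i < n there is a class j_i such that D classifies I_{f, t_{i+1} − t_i}(f(x, t_i)) as j_i, then all the classes j_i are equal to j_0 and D classifies the full neighborhood I_{f,δ̄}(x) as j_0; in particular I_{f,δ̄}(x) is robust. -/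
lemma exists_cell (n : ℕ) (hn : 0 < n) (t : ℕ → ℝ) (δ : ℝ)
    (h0 : t 0 ≤ δ) (hn' : δ ≤ t n) : ∃ i < n, t i ≤ δ ∧ δ ≤ t (i + 1) := by
  induction n with
  | zero => omega
  | succ m ih =>
    by_cases h : δ ≤ t m
    · rcases Nat.eq_zero_or_pos m with hm | hm
      · subst hm
        exact ⟨0, Nat.zero_lt_one, h0, hn'⟩
      · obtain ⟨i, hi, h1, h2⟩ := ih hm h
        exact ⟨i, Nat.lt_succ_of_lt hi, h1, h2⟩
    · exact ⟨m, Nat.lt_succ_self m, le_of_not_ge h, hn'⟩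

/-- Soundness of divide-and-conquer feature verification:
given a partition `0 = t 0 ≤ t 1 ≤ … ≤ t n = δ̄` of `[0,δ̄]` such that for each
`i < n` the classifier `D` classifies the cell `I_{f, t(i+1) - t(i)}(f(x, t i))`
as class `j i`, all the classes `j i` equal `j 0` and `D` classifies the full
neighborhood `I_{f,δ̄}(x)` as `j 0`; in particular `I_{f,δ̄}(x)` is robust
(every point of it receives the same classification `j 0` as `x`). -/
theorem divide_and_conquer_soundness {d c : ℕ} (hc : 2 ≤ c)
    (D : (Fin d → ℝ) → Fin c → ℝ)
    (f : (Fin d → ℝ) → ℝ → (Fin d → ℝ))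
    (hf0 : ∀ x, f x 0 = x)
    (hfadd : ∀ x a b, 0 ≤ a → 0 ≤ b → f (f x a) b = f x (a + b))
    (x : Fin d → ℝ) (δbar : ℝ) (hδbar : 0 ≤ δbar)
    (n : ℕ) (hn : 0 < n) (t : ℕ → ℝ)
    (ht0 : t 0 = 0) (htn : t n = δbar)
    (hmono : ∀ i < n, t i ≤ t (i + 1))
    (j : ℕ → Fin c)
    (hstep : ∀ i < n,
      ∀ y ∈ {y : Fin d → ℝ | ∃ δ, 0 ≤ δ ∧ δ ≤ t (i + 1) - t i ∧ y = f (f x (t i)) δ},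
        ∀ k, k ≠ j i → D y (j i) > D y k) :
    (∀ i < n, j i = j 0) ∧
      (∀ y ∈ {y : Fin d → ℝ | ∃ δ, 0 ≤ δ ∧ δ ≤ δbar ∧ y = f x δ},
        ∀ k, k ≠ j 0 → D y (j 0) > D y k) := by
  -- nonnegativity of partition points
  have hnonneg : ∀ i, i ≤ n → 0 ≤ t i := by
    intro i hi
    induction i with
    | zero => simp [ht0]
    | succ m ih =>
      have hm : m < n := hi
      exact le_trans (ih (le_of_lt hm)) (hmono m hm)
  -- adjacent classes agree
  have hadj : ∀ i, i + 1 < n → j (i + 1) = j i := by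
    intro i hi
    by_contra hne
    have hi' : i < n := Nat.lt_of_succ_lt hi
    -- the point f x (t (i+1)) is in cell i
    have hmem_i : f x (t (i + 1)) ∈
        {y : Fin d → ℝ | ∃ δ, 0 ≤ δ ∧ δ ≤ t (i + 1) - t i ∧ y = f (f x (t i)) δ} := by
      refine ⟨t (i + 1) - t i, by linarith [hmono i hi'], le_refl _, ?_⟩
      rw [hfadd x (t i) (t (i + 1) - t i) (hnonneg i (le_of_lt hi'))
        (by linarith [hmono i hi'])]
      ring_nf
    -- and in cell i+1
    have hmem_i1 : f x (t (i + 1)) ∈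
        {y : Fin d → ℝ | ∃ δ, 0 ≤ δ ∧ δ ≤ t (i + 2) - t (i + 1) ∧ y = f (f x (t (i + 1))) δ} := by
      refine ⟨0, le_refl _, by linarith [hmono (i + 1) hi], ?_⟩
      rw [hf0]
    have h1 := hstep i hi' _ hmem_i (j (i + 1)) hne
    have h2 := hstep (i + 1) hi _ hmem_i1 (j i) (fun h => hne h.symm)
    exact absurd h1 (not_lt.mpr (le_of_lt h2))
  have hall : ∀ i < n, j i = j 0 := by
    intro i hi
    induction i with
    | zero => rfl
    | succ m ih =>
      rw [hadj m hi]
      exact ih (Nat.lt_of_succ_lt hi)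
  refine ⟨hall, ?_⟩
  rintro y ⟨δ, hδ0, hδle, rfl⟩ k hk
  obtain ⟨i, hi, h1, h2⟩ := exists_cell n hn t δ (ht0 ▸ hδ0) (htn ▸ hδle)
  have hti : 0 ≤ t i := hnonneg i (le_of_lt hi)
  have hmem : f x δ ∈
      {y : Fin d → ℝ | ∃ δ', 0 ≤ δ' ∧ δ' ≤ t (i + 1) - t i ∧ y = f (f x (t i)) δ'} := by
    refine ⟨δ - t i, by linarith, by linarith, ?_⟩
    rw [hfadd x (t i) (δ - t i) hti (by linarith)]
    ring_nf
  have hji := hall i hi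
  have := hstep i hi _ hmem k (hji ▸ hk)
  rwa [hji] at this
end

section
/- Soundness of grid splitting for two-feature neighborhoods (Theorem 2, soundness core): Let D : ℝ^d → ℝ^c be a classifier and let f_1, f_2 be additive features on ℝ^d that commute, i.e., f_2(f_1(x,a),b) = f_1(f_2(x,b),a) for all x and a, b ≥ 0. Let 0 = s_0 ≤ s_1 ≤ … ≤ s_m = δ̄_1 and 0 = t_0 ≤ t_1 ≤ … ≤ t_n = δ̄_2 be partitions. If for every i < m and j < n there is a class c_{ij} such that D classifies the grid cell { f_2(f_1(y, a), b) | 0 ≤ a ≤ s_{i+1} − s_i, 0 ≤ b ≤ t_{j+1} − t_j } with y = f_2(f_1(x, s_i), t_j) as c_{ij}, then all c_{ij} equal c_{00} and D classifies the full two-feature neighborhood I_{f_1,δ̄_1,f_2,δ̄_2}(x) = { f_2(f_1(x,δ_1),δ_2) | 0 ≤ δ_1 ≤ δ̄_1, 0 ≤ δ_2 ≤ δ̄_2 } as c_{00}. -/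
private lemma exists_cell_s7 (s : ℕ → ℝ) : ∀ m, 0 < m → (∀ i < m, s i ≤ s (i + 1)) →
    ∀ v, s 0 ≤ v → v ≤ s m → ∃ i < m, s i ≤ v ∧ v ≤ s (i + 1) := by
  intro m
  induction m with
  | zero => intro h; omega
  | succ m ih =>
    intro _ hmono v h0 hv
    rcases Nat.eq_zero_or_pos m with rfl | hm
    · exact ⟨0, Nat.zero_lt_one, h0, hv⟩
    · by_cases hvm : v ≤ s m
      · obtain ⟨i, hi, h1, h2⟩ := ih hm (fun i hi => hmono i (by omega)) v h0 hvm
        exact ⟨i, by omega, h1, h2⟩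
      · exact ⟨m, Nat.lt_succ_self m, le_of_not_ge hvm, hv⟩

/-- Soundness of grid splitting for two-feature neighborhoods:
for commuting additive features `f₁, f₂`, partitions `0 = s 0 ≤ … ≤ s m = δ̄₁`
and `0 = t 0 ≤ … ≤ t n = δ̄₂`, if `D` classifies every grid cell
`{ f₂(f₁(y,a),b) | 0 ≤ a ≤ s(i+1)-s(i), 0 ≤ b ≤ t(j+1)-t(j) }` with
`y = f₂(f₁(x, s i), t j)` as class `cls i j`, then all `cls i j` equal
`cls 0 0` and `D` classifies the full two-feature neighborhood
`I_{f₁,δ̄₁,f₂,δ̄₂}(x)` as `cls 0 0`. -/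
theorem grid_splitting_soundness {d c : ℕ} (hc : 2 ≤ c)
    (D : (Fin d → ℝ) → Fin c → ℝ)
    (f₁ f₂ : (Fin d → ℝ) → ℝ → (Fin d → ℝ))
    (hf₁0 : ∀ x, f₁ x 0 = x)
    (hf₂0 : ∀ x, f₂ x 0 = x)
    (hf₁add : ∀ x a b, 0 ≤ a → 0 ≤ b → f₁ (f₁ x a) b = f₁ x (a + b))
    (hf₂add : ∀ x a b, 0 ≤ a → 0 ≤ b → f₂ (f₂ x a) b = f₂ x (a + b))
    (hcomm : ∀ x a b, 0 ≤ a → 0 ≤ b → f₂ (f₁ x a) b = f₁ (f₂ x b) a)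
    (x : Fin d → ℝ) (δbar₁ δbar₂ : ℝ) (hδ₁ : 0 ≤ δbar₁) (hδ₂ : 0 ≤ δbar₂)
    (m n : ℕ) (hm : 0 < m) (hn : 0 < n)
    (s t : ℕ → ℝ)
    (hs0 : s 0 = 0) (hsm : s m = δbar₁) (hsmono : ∀ i < m, s i ≤ s (i + 1))
    (ht0 : t 0 = 0) (htn : t n = δbar₂) (htmono : ∀ j < n, t j ≤ t (j + 1))
    (cls : ℕ → ℕ → Fin c)
    (hcell : ∀ i < m, ∀ j < n,
      ∀ y ∈ {y : Fin d → ℝ | ∃ a b, 0 ≤ a ∧ a ≤ s (i + 1) - s i ∧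
              0 ≤ b ∧ b ≤ t (j + 1) - t j ∧
              y = f₂ (f₁ (f₂ (f₁ x (s i)) (t j)) a) b},
        ∀ k, k ≠ cls i j → D y (cls i j) > D y k) :
    (∀ i < m, ∀ j < n, cls i j = cls 0 0) ∧
      (∀ y ∈ {y : Fin d → ℝ | ∃ δ₁ δ₂, 0 ≤ δ₁ ∧ δ₁ ≤ δbar₁ ∧ 0 ≤ δ₂ ∧ δ₂ ≤ δbar₂ ∧
              y = f₂ (f₁ x δ₁) δ₂},
        ∀ k, k ≠ cls 0 0 → D y (cls 0 0) > D y k) := by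
  -- nonnegativity of partition points
  have hs_nonneg : ∀ i, i ≤ m → 0 ≤ s i := by
    intro i
    induction i with
    | zero => intro _; simp [hs0]
    | succ i ih =>
      intro hi
      exact le_trans (ih (by omega)) (hsmono i (by omega))
  have ht_nonneg : ∀ j, j ≤ n → 0 ≤ t j := by
    intro j
    induction j with
    | zero => intro _; simp [ht0]
    | succ j ih =>
      intro hj
      exact le_trans (ih (by omega)) (htmono j (by omega))
  -- key: any point with δ₁ ∈ [s i, s (i+1)], δ₂ ∈ [t j, t (j+1)] is in cell (i,j)
  have key : ∀ i < m, ∀ j < n, ∀ δ₁ δ₂, s i ≤ δ₁ → δ₁ ≤ s (i + 1) →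
      t j ≤ δ₂ → δ₂ ≤ t (j + 1) →
      ∃ a b, 0 ≤ a ∧ a ≤ s (i + 1) - s i ∧ 0 ≤ b ∧ b ≤ t (j + 1) - t j ∧
        f₂ (f₁ x δ₁) δ₂ = f₂ (f₁ (f₂ (f₁ x (s i)) (t j)) a) b := by
    intro i hi j hj δ₁ δ₂ h1 h2 h3 h4
    have hsi : 0 ≤ s i := hs_nonneg i (by omega)
    have htj : 0 ≤ t j := ht_nonneg j (by omega)
    have ha : (0:ℝ) ≤ δ₁ - s i := by linarith
    have hb : (0:ℝ) ≤ δ₂ - t j := by linarith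
    refine ⟨δ₁ - s i, δ₂ - t j, ha, by linarith, hb, by linarith, ?_⟩
    rw [← hcomm (f₁ x (s i)) (δ₁ - s i) (t j) ha htj,
        hf₁add x (s i) (δ₁ - s i) hsi ha,
        hf₂add (f₁ x (s i + (δ₁ - s i))) (t j) (δ₂ - t j) htj hb]
    ring_nf
  -- shared point forces equal classes
  have shared : ∀ i < m, ∀ j < n, ∀ i' < m, ∀ j' < n, ∀ y,
      y ∈ {y : Fin d → ℝ | ∃ a b, 0 ≤ a ∧ a ≤ s (i + 1) - s i ∧
              0 ≤ b ∧ b ≤ t (j + 1) - t j ∧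
              y = f₂ (f₁ (f₂ (f₁ x (s i)) (t j)) a) b} →
      y ∈ {y : Fin d → ℝ | ∃ a b, 0 ≤ a ∧ a ≤ s (i' + 1) - s i' ∧
              0 ≤ b ∧ b ≤ t (j' + 1) - t j' ∧
              y = f₂ (f₁ (f₂ (f₁ x (s i')) (t j')) a) b} →
      cls i j = cls i' j' := by
    intro i hi j hj i' hi' j' hj' y hy hy'
    by_contra hne
    have h1 := hcell i hi j hj y hy (cls i' j') (fun h => hne h.symm)
    have h2 := hcell i' hi' j' hj' y hy' (cls i j) hne
    linarith
  -- corner membership: f₂ (f₁ x (s i')) (t j') for s i ≤ s i' ≤ s(i+1), etc.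
  have corner : ∀ i < m, ∀ j < n, ∀ δ₁ δ₂, s i ≤ δ₁ → δ₁ ≤ s (i + 1) →
      t j ≤ δ₂ → δ₂ ≤ t (j + 1) →
      f₂ (f₁ x δ₁) δ₂ ∈ {y : Fin d → ℝ | ∃ a b, 0 ≤ a ∧ a ≤ s (i + 1) - s i ∧
              0 ≤ b ∧ b ≤ t (j + 1) - t j ∧
              y = f₂ (f₁ (f₂ (f₁ x (s i)) (t j)) a) b} := by
    intro i hi j hj δ₁ δ₂ h1 h2 h3 h4
    exact key i hi j hj δ₁ δ₂ h1 h2 h3 h4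
  -- adjacent equalities
  have adj_i : ∀ i, i + 1 < m → ∀ j < n, cls i j = cls (i + 1) j := by
    intro i hi j hj
    refine shared i (by omega) j hj (i + 1) hi j hj (f₂ (f₁ x (s (i + 1))) (t j))
      (corner i (by omega) j hj _ _ (hsmono i (by omega)) le_rfl le_rfl (htmono j hj))
      (corner (i + 1) hi j hj _ _ le_rfl (hsmono (i + 1) hi) le_rfl (htmono j hj))
  have adj_j : ∀ i < m, ∀ j, j + 1 < n → cls i j = cls i (j + 1) := by
    intro i hi j hj
    refine shared i hi j (by omega) i hi (j + 1) hj (f₂ (f₁ x (s i)) (t (j + 1)))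
      (corner i hi j (by omega) _ _ le_rfl (hsmono i hi) (htmono j (by omega)) le_rfl)
      (corner i hi (j + 1) hj _ _ le_rfl (hsmono i hi) le_rfl (htmono (j + 1) hj))
  have col : ∀ i < m, cls i 0 = cls 0 0 := by
    intro i
    induction i with
    | zero => intro _; rfl
    | succ i ih =>
      intro hi
      rw [← adj_i i hi 0 hn]
      exact ih (by omega)
  have all_eq : ∀ i < m, ∀ j < n, cls i j = cls 0 0 := by
    intro i hi j
    induction j with
    | zero => intro _; exact col i hi
    | succ j ih =>
      intro hj
      rw [← adj_j i hi j hj]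
      exact ih (by omega)
  refine ⟨all_eq, ?_⟩
  rintro y ⟨δ₁, δ₂, h1, h2, h3, h4, rfl⟩ k hk
  obtain ⟨i, hi, hi1, hi2⟩ := exists_cell_s7 s m hm hsmono δ₁ (by rw [hs0]; exact h1)
    (by rw [hsm]; exact h2)
  obtain ⟨j, hj, hj1, hj2⟩ := exists_cell_s7 t n hn htmono δ₂ (by rw [ht0]; exact h3)
    (by rw [htn]; exact h4)
  have hmem := key i hi j hj δ₁ δ₂ hi1 hi2 hj1 hj2
  have := hcell i hi j hj _ hmem k (by rw [all_eq i hi j hj]; exact hk)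
  rwa [all_eq i hi j hj] at this
end
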